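/- The number e is transcendental over ℚ. -/

import Mathlib

/-!
Hermite's argument. Suppose `a₀ + ∑ aᵢ e^{rᵢ} = 0` with integers `a₀ ≠ 0` and `rᵢ ≠ 0`, and let
`f = ∏ (X - rᵢ)`. For every large prime `p`, the analytic part of the Lindemann–Weierstrass theorem
yields an integer `n` prime to `p` and `g ∈ ℤ[X]` such that each `n e^{rᵢ}` lies within
`c ^ p / (p - 1)!` of `p g(rᵢ)`. Multiplying the relation by `n` shows that the integer
`a₀ n + p ∑ aᵢ g(rᵢ)`, which is prime to `p` once `p > |a₀|`, is smaller than `1` in absolute value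
for `p` large.
-/

open Polynomial Filter Topology LindemannWeierstrass
open scoped Nat

theorem exp_polynomial_approx_int_roots (f : ℤ[X]) (hf : f.eval 0 ≠ 0) :
    ∃ c : ℝ, ∀ p > (f.eval 0).natAbs, p.Prime → ∃ n : ℤ, ¬ (p : ℤ) ∣ n ∧ ∃ g : ℤ[X],
      ∀ k : ℤ, f.IsRoot k → |n * Real.exp k - p * g.eval k| ≤ c ^ p / (p - 1)! := by
  obtain ⟨c, hc⟩ := exp_polynomial_approx f hf
  refine ⟨c, fun p hpf hp => ?_⟩
  obtain ⟨n, hpn, g, -, hg⟩ := hc p hpf hp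
  refine ⟨n, hpn, g, fun k hk => ?_⟩
  have hk' : (k : ℂ) ∈ f.aroots ℂ := by
    refine mem_aroots.2 ⟨fun h => hf (by simp [h]), ?_⟩
    rw [← eq_intCast (algebraMap ℤ ℂ), aeval_algebraMap_apply_eq_algebraMap_eval, hk.eq_zero,
      map_zero]
  have := hg hk'
  rw [← eq_intCast (algebraMap ℤ ℂ), aeval_algebraMap_apply_eq_algebraMap_eval] at this
  convert this using 1
  rw [← Real.norm_eq_abs, ← Complex.norm_real]
  simp [Complex.ofReal_exp]

theorem exists_prime_gt_mul_pow_div_factorial_lt_one (C c : ℝ) (M : ℕ) :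
    ∃ p, p.Prime ∧ M < p ∧ C * (c ^ p / (p - 1)!) < 1 := by
  have hlim : Tendsto (fun p : ℕ => C * (c ^ p / (p - 1)!)) atTop (𝓝 0) := by
    have h := ((FloorSemiring.tendsto_pow_div_factorial_atTop c).const_mul (C * c)).comp
      (tendsto_sub_atTop_nat 1)
    rw [mul_zero] at h
    refine h.congr' ((eventually_ge_atTop 1).mono fun p hp => ?_)
    simp only [Function.comp_apply]
    rw [← pow_sub_one_mul (by omega : p ≠ 0) c]
    ring
  have hprimes : ∃ᶠ p in atTop, Nat.Prime p :=
    Nat.frequently_atTop_iff_infinite.2 Nat.infinite_setOfPred_prime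
  obtain ⟨p, hp, hM, hlt⟩ := (hprimes.and_eventually
    ((eventually_gt_atTop M).and (hlim.eventually_lt_const one_pos))).exists
  exact ⟨p, hp, hM, hlt⟩

theorem int_add_sum_mul_exp_int_ne_zero {ι : Type*} (s : Finset ι) (a₀ : ℤ) (ha₀ : a₀ ≠ 0)
    (a r : ι → ℤ) (hr : ∀ i ∈ s, r i ≠ 0) :
    (a₀ : ℝ) + ∑ i ∈ s, a i * Real.exp (r i) ≠ 0 := by
  intro hsum
  set f : ℤ[X] := ∏ i ∈ s, (X - C (r i))
  have hf0 : f.eval 0 ≠ 0 := by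
    simpa [f, eval_prod, Finset.prod_ne_zero_iff] using hr
  have hroot : ∀ i ∈ s, f.IsRoot (r i) := fun i hi => by
    simpa [f, IsRoot, eval_prod] using Finset.prod_eq_zero hi (by simp)
  obtain ⟨c, hc⟩ := exp_polynomial_approx_int_roots f hf0
  obtain ⟨p, hp, hpgt, hsmall⟩ := exists_prime_gt_mul_pow_div_factorial_lt_one
    (∑ i ∈ s, |(a i : ℝ)|) c (max (f.eval 0).natAbs a₀.natAbs)
  obtain ⟨n, hpn, g, hg⟩ := hc p (lt_of_le_of_lt (le_max_left _ _) hpgt) hp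
  set M : ℤ := a₀ * n + p * ∑ i ∈ s, a i * g.eval (r i)
  have hpa₀ : ¬ (p : ℤ) ∣ a₀ := fun h =>
    (lt_of_le_of_lt (le_max_right _ _) hpgt).not_ge
      (Nat.le_of_dvd (Int.natAbs_pos.2 ha₀) (Int.natCast_dvd.1 h))
  have hpM : ¬ (p : ℤ) ∣ M := by
    rw [dvd_add_left (dvd_mul_right _ _)]
    exact fun h => ((Nat.prime_iff_prime_int.1 hp).dvd_mul.1 h).elim hpa₀ hpn
  have hMR : (M : ℝ) = n * (a₀ + ∑ i ∈ s, a i * Real.exp (r i))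
      - ∑ i ∈ s, a i * (n * Real.exp (r i) - p * g.eval (r i)) := by
    simp only [M, Int.cast_add, Int.cast_mul, Int.cast_natCast, Int.cast_sum]
    rw [mul_add, Finset.mul_sum, Finset.mul_sum, add_sub_assoc, ← Finset.sum_sub_distrib]
    congr 1
    · ring
    · exact Finset.sum_congr rfl fun i _ => by ring
  have hMlt : |(M : ℝ)| < 1 := calc
    |(M : ℝ)| ≤ ∑ i ∈ s, |(a i : ℝ)| * |n * Real.exp (r i) - p * g.eval (r i)| := by
      rw [hMR, hsum, mul_zero, zero_sub, abs_neg]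
      exact (Finset.abs_sum_le_sum_abs _ _).trans_eq (by simp only [abs_mul])
    _ ≤ ∑ i ∈ s, |(a i : ℝ)| * (c ^ p / (p - 1)!) := by
      gcongr with i hi
      exact hg _ (hroot i hi)
    _ < 1 := by rwa [← Finset.sum_mul]
  have hM0 : M = 0 := Int.abs_lt_one_iff.1 (by exact_mod_cast hMlt)
  exact hpM (hM0 ▸ dvd_zero _)

theorem aeval_exp_one_ne_zero_of_coeff_zero_ne_zero (q : ℤ[X]) (hq : q.coeff 0 ≠ 0) :
    aeval (Real.exp 1) q ≠ 0 := by
  have hexp : ∀ i : ℕ, Real.exp 1 ^ i = Real.exp ((i : ℤ) : ℝ) := fun i => by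
    rw [← Real.exp_nat_mul, mul_one, Int.cast_natCast]
  rw [aeval_eq_sum_range, Finset.sum_range_succ', add_comm]
  simpa [zsmul_eq_mul, hexp] using
    int_add_sum_mul_exp_int_ne_zero (Finset.range q.natDegree) (q.coeff 0) hq
      (fun i => q.coeff (i + 1)) (fun i => i + 1) (fun i _ => by omega)

/-- The number `e` is transcendental over `ℚ`. -/
theorem e_transcendental : Transcendental ℚ (Real.exp 1) := fun h => by
  obtain ⟨q, hq0, hq⟩ :=
    ((IsFractionRing.isAlgebraic_iff ℤ ℚ ℝ).2 h).exists_nonzero_coeff_and_aeval_eq_zero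
      (mem_nonZeroDivisors_of_ne_zero (Real.exp_pos 1).ne')
  exact aeval_exp_one_ne_zero_of_coeff_zero_ne_zero q hq0 hq
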